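/- arXiv:2406.06431 — 8 statements merged into one kernel-verified Lean document; each statement's English description precedes it below -/
import Mathlib

section
/- If φ : ℂ → ℂ is continuous on the closed unit disc, holomorphic on the open unit disc, and its boundary values on the unit circle lie in the set {w ∈ ℂ : |w| = 1 and Im w ≥ 0} (the closed upper half of the unit circle), then φ is constant. -/
/-!
On the closed disc `Im φ ≥ 0` (minimum principle for the harmonic function `Im φ`), so `φ`
never takes the value `-i` and the Cayley transform `g = (φ - i)/(φ + i)` is holomorphic on the
disc and continuous up to the boundary. Since `Re g = (|φ|² - 1)/|φ + i|²` vanishes on the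
circle, the minimum principle gives `Re g ≥ 0`, that is `|φ| ≥ 1`, inside. Together with
`|φ| ≤ 1` from the maximum modulus principle, `|φ|` attains its maximum at the centre, so `φ`
is constant.
-/

open Metric Complex

theorem DiffContOnCl.div {𝕜 E : Type*} [NontriviallyNormedField 𝕜] [NormedAddCommGroup E]
    [NormedSpace 𝕜 E] {f g : E → 𝕜} {s : Set E} (hf : DiffContOnCl 𝕜 f s)
    (hg : DiffContOnCl 𝕜 g s) (h₀ : ∀ x ∈ closure s, g x ≠ 0) :
    DiffContOnCl 𝕜 (fun x => f x / g x) s :=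
  ⟨by simpa only [div_eq_mul_inv] using
      hf.1.fun_mul (hg.1.fun_inv fun x hx => h₀ x (subset_closure hx)), hf.2.div hg.2 h₀⟩

theorem re_sub_I_div_add_I (w : ℂ) :
    ((w - I) / (w + I)).re = (‖w‖ ^ 2 - 1) / ‖w + I‖ ^ 2 := by
  rw [div_re, ← add_div, ← normSq_eq_norm_sq, ← normSq_eq_norm_sq]
  congr 1
  simp only [normSq_apply, sub_re, sub_im, add_re, add_im, I_re, I_im]
  ring

section MaximumPrinciple

variable {E : Type*} [NormedAddCommGroup E] [NormedSpace ℂ E] [Nontrivial E]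
  {f : E → ℂ} {U : Set E} {z : E}

theorem re_le_of_forall_mem_frontier_re_le (hU : Bornology.IsBounded U)
    (hf : DiffContOnCl ℂ f U) {C : ℝ} (hC : ∀ z ∈ frontier U, (f z).re ≤ C)
    (hz : z ∈ closure U) : (f z).re ≤ C := by
  have hexp := norm_le_of_forall_mem_frontier_norm_le hU
    (differentiable_exp.comp_diffContOnCl hf) (C := Real.exp C)
    (fun w hw => by simpa only [Function.comp_apply, norm_exp, Real.exp_le_exp] using hC w hw) hz
  simpa only [Function.comp_apply, norm_exp, Real.exp_le_exp] using hexp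

theorem one_le_norm_of_forall_mem_frontier_norm_eq_one (hU : Bornology.IsBounded U)
    (hf : DiffContOnCl ℂ f U) (hI : ∀ z ∈ closure U, f z + I ≠ 0)
    (h1 : ∀ z ∈ frontier U, ‖f z‖ = 1) (hz : z ∈ closure U) : 1 ≤ ‖f z‖ := by
  have hcayley : DiffContOnCl ℂ (fun z => -((f z - I) / (f z + I))) U :=
    ((hf.sub_const I).div (hf.add_const I) hI).neg
  have hre := re_le_of_forall_mem_frontier_re_le hU hcayley (C := 0)
    (fun ζ hζ => by simp [re_sub_I_div_add_I, h1 ζ hζ]) hz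
  rw [neg_re, re_sub_I_div_add_I, neg_nonpos] at hre
  have hpos : 0 < ‖f z + I‖ ^ 2 := by
    have := hI z hz
    positivity
  nlinarith [(le_div_iff₀ hpos).1 hre, norm_nonneg (f z)]

end MaximumPrinciple

theorem constant_of_upper_half_circle_boundary_values
    (φ : ℂ → ℂ)
    (hc : ContinuousOn φ (closedBall 0 1))
    (hd : DifferentiableOn ℂ φ (ball 0 1))
    (hb : ∀ ζ ∈ sphere (0 : ℂ) 1, ‖φ ζ‖ = 1 ∧ 0 ≤ (φ ζ).im) :
    ∃ c : ℂ, ∀ z ∈ closedBall (0 : ℂ) 1, φ z = c := by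
  have hcl : closure (ball (0 : ℂ) 1) = closedBall 0 1 := closure_ball 0 one_ne_zero
  have hfr : frontier (ball (0 : ℂ) 1) = sphere 0 1 := frontier_ball 0 one_ne_zero
  have hφ : DiffContOnCl ℂ φ (ball 0 1) := ⟨hd, hcl ▸ hc⟩
  have him_nonneg : ∀ z ∈ closure (ball (0 : ℂ) 1), 0 ≤ (φ z).im := fun z hz => by
    simpa using re_le_of_forall_mem_frontier_re_le isBounded_ball (hφ.const_smul I) (C := 0)
      (fun ζ hζ => by simpa using (hb ζ (hfr ▸ hζ)).2) hz
  have hadd_I_ne_zero : ∀ z ∈ closure (ball (0 : ℂ) 1), φ z + I ≠ 0 := fun z hz h => by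
    have := congrArg im h
    simp only [add_im, I_im, zero_im] at this
    linarith [him_nonneg z hz]
  have hmax : IsMaxOn (norm ∘ φ) (ball 0 1) 0 := fun z hz =>
    (norm_le_of_forall_mem_frontier_norm_le isBounded_ball hφ
      (fun ζ hζ => (hb ζ (hfr ▸ hζ)).1.le) (subset_closure hz)).trans <|
    one_le_norm_of_forall_mem_frontier_norm_eq_one isBounded_ball hφ hadd_I_ne_zero
      (fun ζ hζ => (hb ζ (hfr ▸ hζ)).1) (subset_closure (mem_ball_self one_pos))
  exact ⟨φ 0, fun z hz => eqOn_closure_of_isPreconnected_of_isMaxOn_norm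
    (convex_ball _ _).isPreconnected isOpen_ball hφ (mem_ball_self one_pos) hmax (hcl ▸ hz)⟩
end

section
/- Every point of the closed unit bidisc lies in the disc hull of the two-torus: for each (a,b) with |a| ≤ 1 and |b| ≤ 1, there exists a map φ : closure(D) → ℂ², continuous, holomorphic on D, with φ(∂D) ⊆ {(z₁,z₂) : |z₁| = |z₂| = 1} and φ(0) = (a,b). -/
/-!
Each coordinate can be handled separately: for `‖a‖ < 1` the disc automorphism
`ζ ↦ (ζ + a) / (1 + conj a * ζ)` maps the unit circle to itself and sends `0` to `a`,
and for `‖a‖ = 1` the constant disc `a` already lies on the circle. The product of two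
such discs is attached to the torus and passes through `(a, b)`.
-/

open Metric Complex ComplexConjugate

namespace Complex

noncomputable def moebius (a ζ : ℂ) : ℂ :=
  (ζ + a) / (1 + conj a * ζ)

@[simp]
lemma moebius_zero (a : ℂ) : moebius a 0 = a := by
  simp [moebius]

lemma one_add_conj_mul_ne_zero {a ζ : ℂ} (ha : ‖a‖ < 1) (hζ : ‖ζ‖ ≤ 1) :
    1 + conj a * ζ ≠ 0 := by
  intro h0
  have : ‖a‖ * ‖ζ‖ = 1 := by
    rw [← RCLike.norm_conj, ← norm_mul, eq_neg_of_add_eq_zero_right h0, norm_neg, norm_one]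
  nlinarith [norm_nonneg a, norm_nonneg ζ]

lemma norm_one_add_conj_mul_of_norm_eq_one (a : ℂ) {ζ : ℂ} (hζ : ‖ζ‖ = 1) :
    ‖1 + conj a * ζ‖ = ‖ζ + a‖ := by
  have hζζ : ζ * conj ζ = 1 := by
    rw [mul_conj, normSq_eq_norm_sq, hζ]; norm_num
  calc ‖1 + conj a * ζ‖ = ‖ζ * conj (ζ + a)‖ := by
        rw [map_add, mul_add, hζζ]; ring_nf
    _ = ‖ζ + a‖ := by rw [norm_mul, hζ, one_mul, RCLike.norm_conj]

variable {a : ℂ}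

lemma continuousOn_moebius (ha : ‖a‖ < 1) : ContinuousOn (moebius a) (closedBall 0 1) := by
  refine ContinuousOn.div (by fun_prop) (by fun_prop) fun ζ hζ ↦ ?_
  exact one_add_conj_mul_ne_zero ha (mem_closedBall_zero_iff.mp hζ)

lemma differentiableOn_moebius (ha : ‖a‖ < 1) : DifferentiableOn ℂ (moebius a) (ball 0 1) := by
  refine DifferentiableOn.div (by fun_prop) (by fun_prop) fun ζ hζ ↦ ?_
  exact one_add_conj_mul_ne_zero ha (mem_ball_zero_iff.mp hζ).le

lemma norm_moebius_of_norm_eq_one (ha : ‖a‖ < 1) {ζ : ℂ} (hζ : ‖ζ‖ = 1) :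
    ‖moebius a ζ‖ = 1 := by
  have hne : ζ + a ≠ 0 := by
    intro h
    rw [eq_neg_of_add_eq_zero_right h, norm_neg, hζ] at ha
    exact lt_irrefl _ ha
  rw [moebius, norm_div, norm_one_add_conj_mul_of_norm_eq_one a hζ,
    div_self (norm_ne_zero_iff.mpr hne)]

end Complex

lemma exists_disc_attached_to_circle_through {a : ℂ} (ha : ‖a‖ ≤ 1) :
    ∃ f : ℂ → ℂ,
      ContinuousOn f (closedBall 0 1) ∧
      DifferentiableOn ℂ f (ball 0 1) ∧
      (∀ ζ ∈ sphere (0 : ℂ) 1, ‖f ζ‖ = 1) ∧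
      f 0 = a := by
  rcases ha.eq_or_lt with ha | ha
  · exact ⟨fun _ ↦ a, continuousOn_const, differentiableOn_const a, fun _ _ ↦ ha, rfl⟩
  · exact ⟨moebius a, continuousOn_moebius ha, differentiableOn_moebius ha,
      fun ζ hζ ↦ norm_moebius_of_norm_eq_one ha (mem_sphere_zero_iff_norm.mp hζ), moebius_zero a⟩

theorem bidisc_in_disc_hull_of_torus
    (a b : ℂ) (ha : ‖a‖ ≤ 1) (hb : ‖b‖ ≤ 1) :
    ∃ φ : ℂ → ℂ × ℂ,
      ContinuousOn φ (closedBall 0 1) ∧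
      DifferentiableOn ℂ φ (ball 0 1) ∧
      (∀ ζ ∈ sphere (0 : ℂ) 1, ‖(φ ζ).1‖ = 1 ∧ ‖(φ ζ).2‖ = 1) ∧
      φ 0 = (a, b) := by
  obtain ⟨f, hf_cont, hf_diff, hf_sphere, hf_zero⟩ := exists_disc_attached_to_circle_through ha
  obtain ⟨g, hg_cont, hg_diff, hg_sphere, hg_zero⟩ := exists_disc_attached_to_circle_through hb
  exact ⟨fun ζ ↦ (f ζ, g ζ), hf_cont.prodMk hg_cont, hf_diff.prodMk hg_diff,
    fun ζ hζ ↦ ⟨hf_sphere ζ hζ, hg_sphere ζ hζ⟩, by simp [hf_zero, hg_zero]⟩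
end

section
/- The image of an analytic disc attached to a bounded set X ⊆ ℂⁿ is contained in the closed convex hull of X: if φ : closure(D) → ℂⁿ is continuous, holomorphic on D, and φ(∂D) ⊆ X, then φ(closure(D)) ⊆ closedConvexHull(X). -/
/-!
Pick a point of the disc outside the closed convex hull and separate it from the hull by a
continuous complex-linear functional `L` with `re ∘ L < u` on the hull. The function `exp ∘ L ∘ φ`
is holomorphic on the disc, has modulus `exp (re (L ∘ φ)) ≤ exp u` on the boundary circle, and so,
by the maximum modulus principle, also at the chosen point: a contradiction.
-/

open Metric Complex Set

theorem DiffContOnCl.re_le_of_forall_mem_frontier_re_le {E : Type*} [NormedAddCommGroup E]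
    [NormedSpace ℂ E] [Nontrivial E] {g : E → ℂ} {U : Set E}
    (hU : Bornology.IsBounded U) (hg : DiffContOnCl ℂ g U) {c : ℝ}
    (hc : ∀ w ∈ frontier U, (g w).re ≤ c) {z : E} (hz : z ∈ closure U) : (g z).re ≤ c := by
  have hexp : DiffContOnCl ℂ (fun w ↦ exp (g w)) U := differentiable_exp.comp_diffContOnCl hg
  have h := norm_le_of_forall_mem_frontier_norm_le hU hexp (C := Real.exp c)
    (fun w hw ↦ by simpa only [norm_exp, Real.exp_le_exp] using hc w hw) hz
  rwa [norm_exp, Real.exp_le_exp] at h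

theorem DiffContOnCl.mapsTo_closure_of_mapsTo_frontier {E F : Type*} [NormedAddCommGroup E]
    [NormedSpace ℂ E] [Nontrivial E] [NormedAddCommGroup F] [NormedSpace ℂ F] {f : E → F}
    {U : Set E} {K : Set F} (hU : Bornology.IsBounded U) (hf : DiffContOnCl ℂ f U)
    (hK : Convex ℝ K) (hK' : IsClosed K) (hfK : MapsTo f (frontier U) K) :
    MapsTo f (closure U) K := by
  intro z hz
  by_contra hzK
  obtain ⟨L, u, hLK, hLz⟩ := RCLike.geometric_hahn_banach_closed_point (𝕜 := ℂ) hK hK' hzK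
  have hle : (L (f z)).re ≤ u :=
    (L.differentiable.comp_diffContOnCl hf).re_le_of_forall_mem_frontier_re_le hU
      (fun w hw ↦ (hLK _ (hfK hw)).le) hz
  exact hle.not_gt hLz

theorem attached_disc_in_closed_convex_hull_general
    (n : ℕ) (X : Set (Fin n → ℂ))
    (φ : ℂ → (Fin n → ℂ))
    (hc : ContinuousOn φ (closedBall 0 1))
    (hd : DifferentiableOn ℂ φ (ball 0 1))
    (hb : φ '' sphere (0 : ℂ) 1 ⊆ X) :
    φ '' closedBall (0 : ℂ) 1 ⊆ closure (convexHull ℝ X) := by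
  have hφ : DiffContOnCl ℂ φ (ball (0 : ℂ) 1) := .mk_ball hd hc
  have hfrontier : MapsTo φ (frontier (ball 0 1)) (closure (convexHull ℝ X)) := by
    rw [frontier_ball 0 one_ne_zero]
    exact fun w hw ↦ subset_closure (subset_convexHull ℝ X (hb (mem_image_of_mem φ hw)))
  have hclosure := hφ.mapsTo_closure_of_mapsTo_frontier isBounded_ball
    (convex_convexHull ℝ X).closure isClosed_closure hfrontier
  rw [closure_ball 0 one_ne_zero] at hclosure
  exact hclosure.image_subset

theorem attached_disc_in_closed_convex_hull
    (n : ℕ) (X : Set (Fin n → ℂ)) (hX : X.Nonempty) (hXb : Bornology.IsBounded X)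
    (φ : ℂ → (Fin n → ℂ))
    (hc : ContinuousOn φ (closedBall 0 1))
    (hd : DifferentiableOn ℂ φ (ball 0 1))
    (hb : φ '' sphere (0 : ℂ) 1 ⊆ X) :
    φ '' closedBall (0 : ℂ) 1 ⊆ closure (convexHull ℝ X) :=
  attached_disc_in_closed_convex_hull_general n X φ hc hd hb
end

section
/- Fix t > 0 and let f be a continuous complex-valued function on the circle {z ∈ ℂ : |z| = t}. Then f extends to a continuous function on the closed disc {|z| ≤ t} that is holomorphic on the open disc {|z| < t} if and only if ∫₀^{2π} f(t e^{iθ}) e^{i(k+1)θ} dθ = 0 for every integer k ≥ 0. -/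
/-!
For `F` holomorphic on the disc and continuous up to the circle, the moments are the circle
averages of `z ^ (k + 1) • F z`, which vanish by the mean value property.

Conversely, on the circle `|z| = R` the Poisson kernel is `z / (z - w) + q / (1 - q)` with
`q = conj w * z / R ^ 2`. Expanding `q / (1 - q)` as a geometric series in `z`, the moment
condition kills its contribution, so the Poisson integral of `f` equals its Cauchy integral and is
holomorphic in the open disc. Since the Poisson kernel is a positive approximate identity, the
Poisson integral tends to `f ζ` at every point `ζ` of the circle; hence `f` on the circle together
with its Poisson integral inside is continuous on the closed disc.
-/

open Complex Metric Real Filter Topology ComplexConjugate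

section PoissonKernel

variable {c w z : ℂ} {R : ℝ}

lemma poissonKernel_eq_of_mem_sphere (hz : z ∈ sphere c R) :
    poissonKernel c w z = (R ^ 2 - ‖w - c‖ ^ 2) / ‖z - w‖ ^ 2 := by
  rw [poissonKernel_def, sub_sub_sub_cancel_right, ← mem_sphere_iff_norm.mp hz]

lemma poissonKernel_nonneg (hz : z ∈ sphere c R) (hw : w ∈ ball c R) :
    0 ≤ poissonKernel c w z := by
  have := mem_ball_iff_norm.mp hw
  have : 0 ≤ ‖w - c‖ := norm_nonneg _
  rw [poissonKernel_eq_of_mem_sphere hz]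
  exact div_nonneg (by nlinarith) (by positivity)

lemma poissonKernel_le_of_le_norm_sub {ρ : ℝ} (hz : z ∈ sphere c R) (hw : w ∈ ball c R)
    (hρ : 0 < ρ) (hzw : ρ ≤ ‖z - w‖) :
    poissonKernel c w z ≤ (R ^ 2 - ‖w - c‖ ^ 2) / ρ ^ 2 := by
  have := mem_ball_iff_norm.mp hw
  have : 0 ≤ ‖w - c‖ := norm_nonneg _
  rw [poissonKernel_eq_of_mem_sphere hz]
  gcongr
  nlinarith

lemma continuousOn_poissonKernel_sphere (hw : w ∈ ball c R) :
    ContinuousOn (poissonKernel c w) (sphere c R) := by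
  rw [poissonKernel_eq_re_herglotzRieszKernel, ← abs_of_pos (pos_of_mem_ball hw)]
  exact continuous_re.comp_continuousOn (continuousOn_herglotzRieszKernel_sphere hw)

lemma circleAverage_poissonKernel (hw : w ∈ ball c R) :
    circleAverage (poissonKernel c w) c R = 1 := by
  have h := DiffContOnCl.circleAverage_poissonKernel_smul (diffContOnCl_const (c := (1 : ℂ))) hw
  rw [circleAverage_def] at h
  simp only [Pi.smul_apply', Complex.real_smul, mul_one, intervalIntegral.integral_ofReal] at h
  exact_mod_cast h

lemma ofReal_poissonKernel_zero_of_mem_sphere (hz : z ∈ sphere 0 R) (hw : w ∈ ball 0 R) :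
    (poissonKernel 0 w z : ℂ) = z / (z - w) + conj w / R ^ 2 * z / (1 - conj w / R ^ 2 * z) := by
  have hR : 0 < R := pos_of_mem_ball hw
  have hz0 : z ≠ 0 := ne_of_mem_sphere hz hR.ne'
  have hz0' : conj z ≠ 0 := (map_ne_zero _).mpr hz0
  have hzw : z - w ≠ 0 := sub_ne_zero.mpr fun h ↦ by simp_all [mem_sphere_iff_norm]
  have hzw' : conj z - conj w ≠ 0 := by rw [← map_sub]; exact (map_ne_zero _).mpr hzw
  have hRz : (R : ℂ) ^ 2 = z * conj z := by rw [mul_conj', ← mem_sphere_zero_iff_norm.mp hz]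
  rw [poissonKernel_def, sub_zero, sub_zero, mem_sphere_zero_iff_norm.mp hz]
  push_cast
  rw [← mul_conj', ← mul_conj', hRz, map_sub]
  field_simp
  ring

end PoissonKernel

variable {E : Type*} [NormedAddCommGroup E]

section PoissonIntegral

variable [NormedSpace ℝ E] {f : ℂ → E} {c w : ℂ} {R : ℝ}

lemma norm_circleAverage_le (f : ℂ → E) (c : ℂ) (R : ℝ) :
    ‖circleAverage f c R‖ ≤ circleAverage (fun z ↦ ‖f z‖) c R := by
  rw [circleAverage_def, circleAverage_def, norm_smul, smul_eq_mul,
    Real.norm_of_nonneg (by positivity)]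
  gcongr
  exact intervalIntegral.norm_integral_le_integral_norm two_pi_pos.le

noncomputable def poissonIntegral (f : ℂ → E) (c : ℂ) (R : ℝ) (w : ℂ) : E :=
  circleAverage (poissonKernel c w • f) c R

lemma norm_poissonKernel_smul_sub_le {ζ z : ℂ} {M δ ε : ℝ} (hz : z ∈ sphere c R)
    (hw : w ∈ ball c R) (hζ : ζ ∈ sphere c R) (hM : ∀ x ∈ sphere c R, ‖f x‖ ≤ M) (hδ : 0 < δ)
    (hwζ : dist w ζ < δ / 2) (hε : 0 ≤ ε) (hf : dist z ζ < δ → ‖f z - f ζ‖ ≤ ε) :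
    ‖poissonKernel c w z • (f z - f ζ)‖ ≤
      ε * poissonKernel c w z + 2 * M * ((R ^ 2 - ‖w - c‖ ^ 2) / (δ / 2) ^ 2) := by
  have hP := poissonKernel_nonneg hz hw
  have hM0 : 0 ≤ M := (norm_nonneg _).trans (hM ζ hζ)
  have hK : 0 ≤ (R ^ 2 - ‖w - c‖ ^ 2) / (δ / 2) ^ 2 := by
    have := mem_ball_iff_norm.mp hw
    have : 0 ≤ ‖w - c‖ := norm_nonneg _
    exact div_nonneg (by nlinarith) (by positivity)
  rw [norm_smul, Real.norm_of_nonneg hP]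
  by_cases hzζ : dist z ζ < δ
  · have := hf hzζ
    nlinarith
  · have hzw : δ / 2 ≤ ‖z - w‖ := by
      rw [← dist_eq_norm]
      linarith [dist_triangle z w ζ]
    have := poissonKernel_le_of_le_norm_sub hz hw (half_pos hδ) hzw
    have : ‖f z - f ζ‖ ≤ 2 * M := (norm_sub_le _ _).trans (by linarith [hM z hz, hM ζ hζ])
    nlinarith

variable [CompleteSpace E]

lemma poissonIntegral_sub_eq_circleAverage_smul_sub (hf : ContinuousOn f (sphere c R))
    (hw : w ∈ ball c R) (a : E) :
    poissonIntegral f c R w - a =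
      circleAverage (fun z ↦ poissonKernel c w z • (f z - a)) c R := by
  have hR := (pos_of_mem_ball hw).le
  have hP := continuousOn_poissonKernel_sphere hw
  have hPa : circleAverage (fun z ↦ poissonKernel c w z • a) c R = a := by
    have h := circleAverage_poissonKernel hw
    rw [circleAverage_def] at h
    rw [circleAverage_def, intervalIntegral.integral_smul_const, smul_smul, ← smul_eq_mul, h,
      one_smul]
  simp only [smul_sub]
  rw [circleAverage_fun_sub (f₁ := fun z ↦ poissonKernel c w z • f z)
    (f₂ := fun z ↦ poissonKernel c w z • a)
    ((hP.smul hf).circleIntegrable hR) ((hP.smul continuousOn_const).circleIntegrable hR), hPa]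
  rfl

theorem tendsto_poissonIntegral {ζ : ℂ} (hf : ContinuousOn f (sphere c R))
    (hζ : ζ ∈ sphere c R) :
    Tendsto (poissonIntegral f c R) (𝓝[ball c R] ζ) (𝓝 (f ζ)) := by
  obtain ⟨M, hM⟩ := (isCompact_sphere c R).exists_bound_of_continuousOn hf
  rw [Metric.tendsto_nhds]
  intro ε hε
  obtain ⟨δ, hδ, hfδ⟩ := Metric.continuousWithinAt_iff.mp (hf ζ hζ) (ε / 2) (half_pos hε)
  -- `K w` bounds the kernel on the arc at distance `≥ δ / 2` from `w`, and `K ζ = 0`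
  set K : ℂ → ℝ := fun w ↦ (R ^ 2 - ‖w - c‖ ^ 2) / (δ / 2) ^ 2
  have hK : ∀ᶠ w in 𝓝 ζ, 2 * M * K w < ε / 2 := by
    have hKζ : 2 * M * K ζ < ε / 2 := by simp [K, mem_sphere_iff_norm.mp hζ, hε]
    have : ContinuousAt (fun w ↦ 2 * M * K w) ζ := by fun_prop
    exact this.eventually (gt_mem_nhds hKζ)
  filter_upwards [self_mem_nhdsWithin, nhdsWithin_le_nhds (ball_mem_nhds ζ (half_pos hδ)),
    nhdsWithin_le_nhds hK] with w hw hwζ hKw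
  have hR : 0 < R := pos_of_mem_ball hw
  have hP := continuousOn_poissonKernel_sphere hw
  have hbound : ∀ z ∈ sphere c |R|,
      ‖poissonKernel c w z • (f z - f ζ)‖ ≤ ε / 2 * poissonKernel c w z + 2 * M * K w := by
    intro z hz
    rw [abs_of_pos hR] at hz
    refine norm_poissonKernel_smul_sub_le hz hw hζ hM hδ hwζ (half_pos hε).le fun hzζ ↦ ?_
    rw [← dist_eq_norm]
    exact (hfδ hz hzζ).le
  rw [dist_eq_norm, poissonIntegral_sub_eq_circleAverage_smul_sub hf hw]
  calc _ ≤ circleAverage (fun z ↦ ‖poissonKernel c w z • (f z - f ζ)‖) c R :=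
        norm_circleAverage_le _ _ _
    _ ≤ circleAverage (fun z ↦ ε / 2 * poissonKernel c w z + 2 * M * K w) c R := by
        apply circleAverage_mono _ _ hbound
        · exact (hP.smul (hf.sub continuousOn_const)).norm.circleIntegrable hR.le
        · exact ((continuousOn_const.mul hP).add continuousOn_const).circleIntegrable hR.le
    _ = ε / 2 + 2 * M * K w := by
        rw [circleAverage_fun_add (f₁ := fun z ↦ ε / 2 * poissonKernel c w z)
          ((continuousOn_const.mul hP).circleIntegrable hR.le) (circleIntegrable_const _ _ _),
          circleAverage_const]
        simp only [← smul_eq_mul, circleAverage_fun_smul, circleAverage_poissonKernel hw]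
        simp only [smul_eq_mul, mul_one]
    _ < ε := by linarith

end PoissonIntegral

section Moments

variable [NormedSpace ℂ E] {f : ℂ → E} {c w : ℂ} {R : ℝ}

lemma circleAverage_mul_div_one_sub_mul_smul_eq_zero {a : ℂ}
    (hf : CircleIntegrable f 0 R) (ha : ‖a‖ * |R| < 1)
    (hmom : ∀ k : ℕ, circleAverage (fun z ↦ z ^ (k + 1) • f z) 0 R = 0) :
    circleAverage (fun z ↦ (a * z / (1 - a * z)) • f z) 0 R = 0 := by
  set r := ‖a‖ * |R|
  have hr : 0 ≤ r := by positivity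
  have hsum : HasSum
      (fun k : ℕ ↦ ∫ θ in 0..2 * π, (a * circleMap 0 R θ) ^ (k + 1) • f (circleMap 0 R θ))
      (∫ θ in 0..2 * π,
        (a * circleMap 0 R θ / (1 - a * circleMap 0 R θ)) • f (circleMap 0 R θ)) := by
    refine intervalIntegral.hasSum_integral_of_dominated_convergence
      (fun k θ ↦ ‖f (circleMap 0 R θ)‖ * r ^ (k + 1)) (fun k ↦ ?_) (fun k ↦ ?_) ?_ ?_ ?_
    · exact (Continuous.aestronglyMeasurable (by fun_prop)).smul hf.def'.1
    · refine .of_forall fun θ _ ↦ ?_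
      rw [norm_smul, norm_pow, norm_mul, norm_circleMap_zero, mul_comm]
    · exact .of_forall fun θ _ ↦
        ((summable_nat_add_iff 1).mpr (summable_geometric_of_lt_one hr ha)).mul_left _
    · simp_rw [tsum_mul_left]
      exact hf.norm.mul_const _
    · refine .of_forall fun θ _ ↦ HasSum.smul_const ?_ _
      have hξ : ‖a * circleMap 0 R θ‖ < 1 := by rwa [norm_mul, norm_circleMap_zero]
      simpa only [pow_succ', div_eq_mul_inv] using
        (hasSum_geometric_of_norm_lt_one hξ).mul_left (a * circleMap 0 R θ)
  have hterm : ∀ k : ℕ,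
      ∫ θ in 0..2 * π, (a * circleMap 0 R θ) ^ (k + 1) • f (circleMap 0 R θ) = 0 := by
    intro k
    have h := hmom k
    rw [circleAverage_def, smul_eq_zero_iff_right (by positivity)] at h
    simp_rw [mul_pow, mul_smul, intervalIntegral.integral_smul, h, smul_zero]
  rw [circleAverage_def, hsum.unique (by simpa only [hterm] using hasSum_zero), smul_zero]

lemma poissonIntegral_eq_circleAverage_div_sub_smul (hf : CircleIntegrable f 0 R)
    (hmom : ∀ k : ℕ, circleAverage (fun z ↦ z ^ (k + 1) • f z) 0 R = 0) (hw : w ∈ ball 0 R) :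
    poissonIntegral f 0 R w = circleAverage (fun z ↦ (z / (z - w)) • f z) 0 R := by
  have hR : 0 < R := pos_of_mem_ball hw
  set a : ℂ := conj w / R ^ 2
  have ha : ‖a‖ * |R| < 1 := by
    rw [norm_div, RCLike.norm_conj, norm_pow, norm_real, Real.norm_eq_abs, abs_of_pos hR,
      div_mul_eq_mul_div, pow_two, mul_div_mul_right _ _ hR.ne', div_lt_one hR]
    exact mem_ball_zero_iff.mp hw
  have hK₁ : ContinuousOn (fun z ↦ z / (z - w)) (sphere 0 |R|) := by
    refine continuousOn_id.div (continuousOn_id.sub continuousOn_const) fun z hz ↦ ?_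
    have hz' : ‖z‖ = |R| := mem_sphere_zero_iff_norm.mp hz
    exact sub_ne_zero.mpr fun h ↦ by
      rw [h, abs_of_pos hR] at hz'
      exact (mem_ball_zero_iff.mp hw).ne hz'
  have hK₂ : ContinuousOn (fun z ↦ a * z / (1 - a * z)) (sphere 0 |R|) := by
    refine (continuousOn_const.mul continuousOn_id).div
      (continuousOn_const.sub (continuousOn_const.mul continuousOn_id)) fun z hz ↦ ?_
    refine sub_ne_zero.mpr fun h ↦ ?_
    have := congrArg norm h
    rw [norm_one, norm_mul, mem_sphere_zero_iff_norm.mp hz] at this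
    linarith
  rw [poissonIntegral, circleAverage_congr_sphere
      (f₂ := fun z ↦ (z / (z - w)) • f z + (a * z / (1 - a * z)) • f z),
    circleAverage_fun_add (hf.fun_continuousOn_smul hK₁) (hf.fun_continuousOn_smul hK₂),
    circleAverage_mul_div_one_sub_mul_smul_eq_zero hf ha hmom, add_zero]
  intro z hz
  rw [abs_of_pos hR] at hz
  rw [Pi.smul_apply', ← Complex.coe_smul, ofReal_poissonKernel_zero_of_mem_sphere hz hw, add_smul]

lemma differentiableOn_circleAverage_div_sub_smul [CompleteSpace E]
    (hf : CircleIntegrable f c R) :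
    DifferentiableOn ℂ (fun w ↦ circleAverage (fun z ↦ ((z - c) / (z - w)) • f z) c R)
      (ball c R) := by
  rcases le_or_gt R 0 with hR | hR
  · rw [ball_eq_empty.mpr hR]
    exact differentiableOn_empty
  have hcauchy := (hasFPowerSeriesOn_cauchy_integral (R := ⟨R, hR.le⟩) hf hR).analyticOnNhd
  rw [Metric.eball_coe (ε := ⟨R, hR.le⟩)] at hcauchy
  refine hcauchy.differentiableOn.congr fun w hw ↦ ?_
  rw [circleAverage_eq_circleIntegral hR.ne']
  congr 1
  refine circleIntegral.integral_congr hR.le fun z hz ↦ ?_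
  have hzc : z - c ≠ 0 := sub_ne_zero.mpr (ne_of_mem_sphere hz hR.ne')
  rw [smul_smul, div_eq_mul_inv, inv_mul_cancel_left₀ hzc]

lemma differentiableOn_poissonIntegral [CompleteSpace E] (hf : CircleIntegrable f 0 R)
    (hmom : ∀ k : ℕ, circleAverage (fun z ↦ z ^ (k + 1) • f z) 0 R = 0) :
    DifferentiableOn ℂ (poissonIntegral f 0 R) (ball 0 R) :=
  (differentiableOn_circleAverage_div_sub_smul hf).congr fun w hw ↦ by
    simp only [poissonIntegral_eq_circleAverage_div_sub_smul hf hmom hw, sub_zero]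

lemma DiffContOnCl.circleAverage_pow_succ_smul_eq_zero [CompleteSpace E] {F : ℂ → E}
    (hF : DiffContOnCl ℂ F (ball 0 |R|)) (k : ℕ) :
    Real.circleAverage (fun z ↦ z ^ (k + 1) • F z) 0 R = 0 := by
  simpa using ((differentiable_pow (k + 1)).diffContOnCl.smul hF).circleAverage

end Moments

lemma continuousOn_closedBall_of_tendsto {X Y : Type*} [PseudoMetricSpace X] [TopologicalSpace Y]
    {F : X → Y} {c : X} {R : ℝ} (h_ball : ContinuousOn F (ball c R))
    (h_sphere : ContinuousOn F (sphere c R))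
    (h_lim : ∀ ζ ∈ sphere c R, Tendsto F (𝓝[ball c R] ζ) (𝓝 (F ζ))) :
    ContinuousOn F (closedBall c R) := by
  rw [← ball_union_sphere]
  rintro z (hz | hz)
  · exact (h_ball.continuousAt (isOpen_ball.mem_nhds hz)).continuousWithinAt
  · exact continuousWithinAt_union.mpr ⟨h_lim z hz, h_sphere z hz⟩

lemma circleAverage_pow_smul_eq_zero_iff {R : ℝ} (hR : R ≠ 0) (f : ℂ → ℂ) (n : ℕ) :
    circleAverage (fun z ↦ z ^ n • f z) 0 R = 0 ↔
      ∫ θ in 0..2 * π, f (R * exp (θ * I)) * exp (n * θ * I) = 0 := by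
  have h : circleAverage (fun z ↦ z ^ n • f z) 0 R
      = (2 * π)⁻¹ * R ^ n * ∫ θ in 0..2 * π, f (R * exp (θ * I)) * exp (n * θ * I) := by
    rw [circleAverage_def, real_smul, ofReal_inv, ofReal_mul, ofReal_ofNat, mul_assoc,
      ← intervalIntegral.integral_const_mul ((R : ℂ) ^ n)]
    congr 2
    funext θ
    rw [circleMap_zero, smul_eq_mul, mul_pow, ← Complex.exp_nat_mul]
    ring_nf
  rw [h]
  simp [hR, pi_ne_zero]

theorem holomorphic_extension_iff_moment_condition
    (t : ℝ) (ht : 0 < t) (f : ℂ → ℂ)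
    (hf : ContinuousOn f (sphere (0 : ℂ) t)) :
    (∃ F : ℂ → ℂ,
        ContinuousOn F (closedBall (0 : ℂ) t) ∧
        DifferentiableOn ℂ F (ball (0 : ℂ) t) ∧
        ∀ z ∈ sphere (0 : ℂ) t, F z = f z) ↔
      (∀ k : ℕ,
        ∫ θ in (0:ℝ)..(2 * π),
          f ((t : ℂ) * Complex.exp (θ * Complex.I)) *
            Complex.exp ((k + 1 : ℕ) * θ * Complex.I) = 0) := by
  simp_rw [← circleAverage_pow_smul_eq_zero_iff ht.ne']
  constructor
  · rintro ⟨F, hFc, hFd, hFf⟩ k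
    have hF : DiffContOnCl ℂ F (ball 0 |t|) := by
      rw [abs_of_pos ht]
      exact ⟨hFd, by rwa [closure_ball _ ht.ne']⟩
    refine (circleAverage_congr_sphere (f₂ := fun z ↦ z ^ (k + 1) • F z) fun z hz ↦ ?_).trans
      (hF.circleAverage_pow_succ_smul_eq_zero k)
    dsimp only
    rw [hFf z (by rwa [abs_of_pos ht] at hz)]
  · intro hmom
    have hP := differentiableOn_poissonIntegral (hf.circleIntegrable ht.le) hmom
    have hsphere : ∀ z ∈ sphere (0 : ℂ) t, z ∉ ball (0 : ℂ) t := fun z hz hz' ↦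
      (mem_ball.mp hz').ne (mem_sphere.mp hz)
    classical
    refine ⟨fun z ↦ if z ∈ ball 0 t then poissonIntegral f 0 t z else f z, ?_,
      hP.congr fun z hz ↦ if_pos hz, fun z hz ↦ if_neg (hsphere z hz)⟩
    refine continuousOn_closedBall_of_tendsto (hP.continuousOn.congr fun z hz ↦ if_pos hz)
      (hf.congr fun z hz ↦ if_neg (hsphere z hz)) fun ζ hζ ↦ ?_
    rw [if_neg (hsphere ζ hζ)]
    exact (tendsto_poissonIntegral hf hζ).congr'
      (eventually_nhdsWithin_of_forall fun z hz ↦ (if_pos hz).symm)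
end

section
/- Let p = (z₁, z₂, w) ∈ ℂ³ with z₂ ≠ 0, z₁ ≠ 0, satisfy that w z₁ conj(z₂) is real and w z₁ conj(z₂) ≥ |z₁ z₂|². Let λ > 0 satisfy λ² = w z₁ / z₂ (which is then a positive real). Then the map φ(ζ) = (λζ, wζ/λ, w) is an analytic disc attached to M = {(ξ₁, ξ₂, ω) ∈ ℂ³ : ω = conj(ξ₁) ξ₂}, |z₁| ≤ λ, and φ(z₁/λ) = p. -/
open Metric Complex

/-! On the unit circle `conj ζ = ζ⁻¹`, so the disc `ζ ↦ (a ζ, b ζ, c)` is attached to `M` as soon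
as `c = conj a · b`, which holds for `a = λ`, `b = w / λ`, `c = w`. Since `λ² z₂ = w z₁`, we have
`w z₁ conj z₂ = λ² |z₂|²`, so the hypothesis `|z₁ z₂|² ≤ w z₁ conj z₂` says `|z₁| ≤ λ`, i.e. the
preimage `z₁ / λ` of `p` lies in the closed disc. -/

theorem starRingEnd_mul_mul_mul_of_norm_eq_one (a b : ℂ) {ζ : ℂ} (hζ : ‖ζ‖ = 1) :
    starRingEnd ℂ (a * ζ) * (b * ζ) = starRingEnd ℂ a * b := by
  have hconj : starRingEnd ℂ ζ * ζ = 1 := by rw [conj_mul', hζ]; norm_num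
  rw [map_mul]
  linear_combination starRingEnd ℂ a * b * hconj

theorem mul_mul_conj_eq_of_sq_eq_mul_div {z₁ z₂ w : ℂ} (hz₂ : z₂ ≠ 0) {l : ℝ}
    (hl2 : (l : ℂ) ^ 2 = w * z₁ / z₂) :
    w * z₁ * starRingEnd ℂ z₂ = ((l ^ 2 * ‖z₂‖ ^ 2 : ℝ) : ℂ) := by
  rw [eq_div_iff hz₂] at hl2
  rw [← hl2, mul_assoc, mul_conj']
  push_cast
  ring

theorem norm_le_of_sq_eq_mul_div {z₁ z₂ w : ℂ} (hz₂ : z₂ ≠ 0) {l : ℝ} (hl : 0 ≤ l)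
    (hl2 : (l : ℂ) ^ 2 = w * z₁ / z₂)
    (hge : ‖z₁ * z₂‖ ^ 2 ≤ (w * z₁ * starRingEnd ℂ z₂).re) :
    ‖z₁‖ ≤ l := by
  rw [mul_mul_conj_eq_of_sq_eq_mul_div hz₂ hl2, ofReal_re, norm_mul, mul_pow] at hge
  have hsq : ‖z₁‖ ^ 2 ≤ l ^ 2 := le_of_mul_le_mul_right hge (by positivity)
  exact (pow_le_pow_iff_left₀ (norm_nonneg z₁) hl two_ne_zero).mp hsq

theorem disc_attached_first_step_general
    (z₁ z₂ w : ℂ) (hz₂ : z₂ ≠ 0)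
    (hge : ‖z₁ * z₂‖ ^ 2 ≤ (w * z₁ * (starRingEnd ℂ) z₂).re)
    (l : ℝ) (hl : 0 < l) (hl2 : ((l : ℂ)) ^ 2 = w * z₁ / z₂) :
    (ContinuousOn (fun ζ : ℂ => ((l : ℂ) * ζ, w * ζ / (l : ℂ), w))
        (closedBall (0 : ℂ) 1)) ∧
      (DifferentiableOn ℂ (fun ζ : ℂ => ((l : ℂ) * ζ, w * ζ / (l : ℂ), w))
        (ball (0 : ℂ) 1)) ∧
      (∀ ζ ∈ sphere (0 : ℂ) 1,
        w = (starRingEnd ℂ) ((l : ℂ) * ζ) * (w * ζ / (l : ℂ))) ∧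
      ‖z₁‖ ≤ l ∧
      (z₁ / (l : ℂ) ∈ closedBall (0 : ℂ) 1) ∧
      (((l : ℂ) * (z₁ / (l : ℂ)), w * (z₁ / (l : ℂ)) / (l : ℂ), w) = (z₁, z₂, w)) := by
  have hl0 : (l : ℂ) ≠ 0 := ofReal_ne_zero.mpr hl.ne'
  have hnorm : ‖z₁‖ ≤ l := norm_le_of_sq_eq_mul_div hz₂ hl.le hl2 hge
  refine ⟨by fun_prop, by fun_prop, fun ζ hζ => ?_, hnorm, ?_, ?_⟩
  · rw [mul_div_right_comm,
      starRingEnd_mul_mul_mul_of_norm_eq_one _ _ (mem_sphere_zero_iff_norm.mp hζ), conj_ofReal,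
      mul_div_cancel₀ _ hl0]
  · rwa [mem_closedBall_zero_iff, norm_div, norm_real, Real.norm_of_nonneg hl.le, div_le_one hl]
  · rw [eq_div_iff hz₂] at hl2
    refine Prod.ext (mul_div_cancel₀ _ hl0) (Prod.ext ?_ rfl)
    field_simp
    linear_combination -hl2

theorem disc_attached_first_step
    (z₁ z₂ w : ℂ) (hz₁ : z₁ ≠ 0) (hz₂ : z₂ ≠ 0)
    (hre : (w * z₁ * (starRingEnd ℂ) z₂).im = 0)
    (hge : ‖z₁ * z₂‖ ^ 2 ≤ (w * z₁ * (starRingEnd ℂ) z₂).re)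
    (l : ℝ) (hl : 0 < l) (hl2 : ((l : ℂ)) ^ 2 = w * z₁ / z₂) :
    (ContinuousOn (fun ζ : ℂ => ((l : ℂ) * ζ, w * ζ / (l : ℂ), w))
        (closedBall (0 : ℂ) 1)) ∧
      (DifferentiableOn ℂ (fun ζ : ℂ => ((l : ℂ) * ζ, w * ζ / (l : ℂ), w))
        (ball (0 : ℂ) 1)) ∧
      (∀ ζ ∈ sphere (0 : ℂ) 1,
        w = (starRingEnd ℂ) ((l : ℂ) * ζ) * (w * ζ / (l : ℂ))) ∧
      ‖z₁‖ ≤ l ∧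
      (z₁ / (l : ℂ) ∈ closedBall (0 : ℂ) 1) ∧
      (((l : ℂ) * (z₁ / (l : ℂ)), w * (z₁ / (l : ℂ)) / (l : ℂ), w) = (z₁, z₂, w)) :=
  disc_attached_first_step_general z₁ z₂ w hz₂ hge l hl hl2
end

section
/- For any w ∈ ℂ, the map φ(ζ) = (conj(w)·ζ, ζ, w) is an analytic disc attached to the set M = {(ξ₁, ξ₂, ω) ∈ ℂ³ : ω = conj(ξ₁)·ξ₂}, and φ(0) = (0, 0, w). -/
open Metric Complex

theorem disc_attached_through_CR_singular_point (w : ℂ) :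
    (ContinuousOn (fun ζ : ℂ => ((starRingEnd ℂ) w * ζ, ζ, w)) (closedBall (0 : ℂ) 1)) ∧
      (DifferentiableOn ℂ (fun ζ : ℂ => ((starRingEnd ℂ) w * ζ, ζ, w)) (ball (0 : ℂ) 1)) ∧
      (∀ ζ ∈ sphere (0 : ℂ) 1,
        w = (starRingEnd ℂ) ((starRingEnd ℂ) w * ζ) * ζ) ∧
      ((starRingEnd ℂ) w * (0 : ℂ), (0 : ℂ), w) = (0, 0, w) := by
  refine ⟨?_, ?_, ?_, by simp⟩
  · fun_prop
  · fun_prop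
  · intro ζ hζ
    have h : ζ * (starRingEnd ℂ) ζ = 1 := by
      rw [mul_comm, Complex.conj_mul']
      simp [mem_sphere_zero_iff_norm.mp hζ]
    rw [map_mul, RingHomCompTriple.comp_apply]
    simp only [RingHom.id_apply]
    rw [mul_assoc, mul_comm ((starRingEnd ℂ) ζ), h, mul_one]
end

section
/- Let f : ℝ → ℝ be a function whose zero set is exactly {0} ∪ {1/n : n ∈ ℕ}. Suppose φ(ζ) = (z(ζ), w₁(ζ), w₂(ζ)) is a nonconstant continuous map from the closed unit disc to ℂ³, holomorphic on the open disc, such that for all ζ on the unit circle, w₁(ζ) = |z(ζ)|² and w₂(ζ) = |z(ζ)|² + f(|z(ζ)|²)·Re z(ζ). Then there exists n ∈ ℕ such that |z(ζ)| = 1/√n for all ζ on the unit circle, and w₁ ≡ w₂ ≡ 1/n on the closed disc. -/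
/-!
The boundary conditions make `w₁` and `w₂` real on the unit circle, so both are constant: a
holomorphic function whose imaginary part is constant on the boundary has constant imaginary
part inside (maximum principle applied to `exp (± I g)`), and a holomorphic function with
constant imaginary part is constant (open mapping theorem). Hence `|z|² = a` and
`a + f a · Re z = b` on the circle. If `f a ≠ 0`, or if `a = 0`, then `Re z` is constant on the
circle, so `z` is constant and the disc is constant. Therefore `f a = 0` with `a ≠ 0`, i.e.
`a = 1/n`.
-/

open Metric Complex Set Bornology

namespace Complex

variable {E : Type*} [NormedAddCommGroup E] [NormedSpace ℂ E] [Nontrivial E]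

theorem re_le_of_forall_mem_frontier_re_le {f : E → ℂ} {U : Set E} (hU : IsBounded U)
    (hd : DiffContOnCl ℂ f U) {C : ℝ} (hC : ∀ z ∈ frontier U, (f z).re ≤ C) {z : E}
    (hz : z ∈ closure U) : (f z).re ≤ C := by
  have hexp : DiffContOnCl ℂ (fun z ↦ exp (f z)) U :=
    ⟨hd.differentiableOn.cexp, hd.continuousOn.cexp⟩
  have := norm_le_of_forall_mem_frontier_norm_le hU hexp (C := Real.exp C)
    (fun w hw ↦ by simpa [norm_exp] using hC w hw) hz
  simpa [norm_exp] using this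

theorem im_eq_of_forall_mem_frontier_im_eq {f : E → ℂ} {U : Set E} (hU : IsBounded U)
    (hd : DiffContOnCl ℂ f U) {k : ℝ} (hk : ∀ z ∈ frontier U, (f z).im = k) {z : E}
    (hz : z ∈ closure U) : (f z).im = k := by
  have hle := re_le_of_forall_mem_frontier_re_le hU (hd.const_smul (-I)) (C := k)
    (fun w hw ↦ by simp [hk w hw]) hz
  have hge := re_le_of_forall_mem_frontier_re_le hU (hd.const_smul I) (C := -k)
    (fun w hw ↦ by simp [hk w hw]) hz
  simp only [Pi.smul_apply, smul_eq_mul, mul_re, neg_re, I_re, I_im, neg_im] at hle hge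
  linarith

theorem exists_eqOn_of_im_eq {g : ℂ → ℂ} {U : Set ℂ} (hUo : IsOpen U) (hUc : IsPreconnected U)
    (hg : DifferentiableOn ℂ g U) {k : ℝ} (hk : ∀ z ∈ U, (g z).im = k) :
    ∃ w, EqOn g (fun _ ↦ w) U := by
  obtain hconst | hopen := (hg.analyticOnNhd hUo).is_constant_or_isOpen hUc
  · exact hconst
  · have himage : g '' U ⊆ interior (im ⁻¹' {k}) :=
      (hopen U subset_rfl hUo).subset_interior_iff.mpr <| by
        rintro _ ⟨z, hz, rfl⟩
        exact hk z hz
    rw [interior_preimage_im, interior_singleton, preimage_empty, subset_empty_iff,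
      image_eq_empty] at himage
    exact ⟨0, by simp [himage]⟩

theorem exists_eqOn_closure_of_forall_mem_frontier_im_eq {g : ℂ → ℂ} {U : Set ℂ}
    (hU : IsBounded U) (hUo : IsOpen U) (hUc : IsPreconnected U) (hg : DiffContOnCl ℂ g U)
    {k : ℝ} (hk : ∀ z ∈ frontier U, (g z).im = k) :
    ∃ w, EqOn g (fun _ ↦ w) (closure U) := by
  obtain ⟨w, hw⟩ := exists_eqOn_of_im_eq hUo hUc hg.differentiableOn fun z hz ↦
    im_eq_of_forall_mem_frontier_im_eq hU hg hk (subset_closure hz)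
  exact ⟨w, EqOn.of_subset_closure hw hg.continuousOn continuousOn_const subset_closure
    subset_rfl⟩

theorem eq_of_mem_closedBall_of_forall_mem_sphere_im_eq {g : ℂ → ℂ} {c : ℂ} {r : ℝ}
    (hr : r ≠ 0) (hc : ContinuousOn g (closedBall c r)) (hd : DifferentiableOn ℂ g (ball c r))
    {k : ℝ} (hk : ∀ z ∈ sphere c r, (g z).im = k) :
    ∀ z ∈ closedBall c r, ∀ z' ∈ closedBall c r, g z = g z' := by
  rw [← closure_ball c hr] at hc ⊢
  rw [← frontier_ball c hr] at hk
  obtain ⟨w, hw⟩ := exists_eqOn_closure_of_forall_mem_frontier_im_eq isBounded_ball isOpen_ball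
    (convex_ball c r).isPreconnected ⟨hd, hc⟩ hk
  intro z hz z' hz'
  rw [hw hz, hw hz']

theorem eq_of_mem_closedBall_of_forall_mem_sphere_re_eq {g : ℂ → ℂ} {c : ℂ} {r : ℝ}
    (hr : r ≠ 0) (hc : ContinuousOn g (closedBall c r)) (hd : DifferentiableOn ℂ g (ball c r))
    {k : ℝ} (hk : ∀ z ∈ sphere c r, (g z).re = k) :
    ∀ z ∈ closedBall c r, ∀ z' ∈ closedBall c r, g z = g z' := fun z hz z' hz' ↦
  smul_right_injective ℂ I_ne_zero <| eq_of_mem_closedBall_of_forall_mem_sphere_im_eq hr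
    (hc.const_smul I) (hd.const_smul I) (k := k) (fun w hw ↦ by simp [hk w hw]) z hz z' hz'

end Complex

theorem discrete_family_of_attached_discs
    (f : ℝ → ℝ)
    (hf : {x : ℝ | f x = 0} = {0} ∪ {x : ℝ | ∃ n : ℕ, 0 < n ∧ x = 1 / (n : ℝ)})
    (z w₁ w₂ : ℂ → ℂ)
    (hzc : ContinuousOn z (closedBall 0 1))
    (hzd : DifferentiableOn ℂ z (ball 0 1))
    (hw₁c : ContinuousOn w₁ (closedBall 0 1))
    (hw₁d : DifferentiableOn ℂ w₁ (ball 0 1))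
    (hw₂c : ContinuousOn w₂ (closedBall 0 1))
    (hw₂d : DifferentiableOn ℂ w₂ (ball 0 1))
    (hnonconst : ¬ ∀ ζ ∈ closedBall (0 : ℂ) 1, ∀ ζ' ∈ closedBall (0 : ℂ) 1,
        z ζ = z ζ' ∧ w₁ ζ = w₁ ζ' ∧ w₂ ζ = w₂ ζ')
    (hb₁ : ∀ ζ ∈ sphere (0 : ℂ) 1, w₁ ζ = ((‖z ζ‖ ^ 2 : ℝ) : ℂ))
    (hb₂ : ∀ ζ ∈ sphere (0 : ℂ) 1,
      w₂ ζ = ((‖z ζ‖ ^ 2 + f (‖z ζ‖ ^ 2) * (z ζ).re : ℝ) : ℂ)) :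
    ∃ n : ℕ, 0 < n ∧
      (∀ ζ ∈ sphere (0 : ℂ) 1, ‖z ζ‖ = 1 / Real.sqrt n) ∧
      (∀ ζ ∈ closedBall (0 : ℂ) 1, w₁ ζ = (1 / (n : ℂ)) ∧ w₂ ζ = (1 / (n : ℂ))) := by
  have h1 : (1 : ℂ) ∈ sphere (0 : ℂ) 1 := by simp
  have hsub : sphere (0 : ℂ) 1 ⊆ closedBall 0 1 := sphere_subset_closedBall
  have hW₁ := eq_of_mem_closedBall_of_forall_mem_sphere_im_eq one_ne_zero hw₁c hw₁d
    (k := 0) fun ζ hζ ↦ by rw [hb₁ ζ hζ, ofReal_im]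
  have hW₂ := eq_of_mem_closedBall_of_forall_mem_sphere_im_eq one_ne_zero hw₂c hw₂d
    (k := 0) fun ζ hζ ↦ by rw [hb₂ ζ hζ, ofReal_im]
  set a := ‖z 1‖ ^ 2 with ha
  have hnorm (ζ) (hζ : ζ ∈ sphere (0 : ℂ) 1) : ‖z ζ‖ ^ 2 = a := by
    exact_mod_cast (hb₁ ζ hζ).symm.trans ((hW₁ ζ (hsub hζ) 1 (hsub h1)).trans (hb₁ 1 h1))
  have hre (ζ) (hζ : ζ ∈ sphere (0 : ℂ) 1) : f a * (z ζ).re = f a * (z 1).re := by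
    have h := (hb₂ ζ hζ).symm.trans ((hW₂ ζ (hsub hζ) 1 (hsub h1)).trans (hb₂ 1 h1))
    rw [hnorm ζ hζ] at h
    exact add_left_cancel (ofReal_injective h)
  have hre_nonconst : ¬ ∀ ζ ∈ sphere (0 : ℂ) 1, (z ζ).re = (z 1).re := by
    intro hre_const
    have hZ := eq_of_mem_closedBall_of_forall_mem_sphere_re_eq one_ne_zero hzc hzd hre_const
    exact hnonconst fun ζ hζ ζ' hζ' ↦ ⟨hZ ζ hζ ζ' hζ', hW₁ ζ hζ ζ' hζ', hW₂ ζ hζ ζ' hζ'⟩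
  have hfa : f a = 0 := by
    by_contra hfa
    exact hre_nonconst fun ζ hζ ↦ mul_left_cancel₀ hfa (hre ζ hζ)
  have ha0 : a ≠ 0 := by
    intro ha0
    have hz0 (ζ) (hζ : ζ ∈ sphere (0 : ℂ) 1) : z ζ = 0 := by simpa [ha0] using hnorm ζ hζ
    exact hre_nonconst fun ζ hζ ↦ by rw [hz0 ζ hζ, hz0 1 h1]
  obtain ⟨n, hn, hna⟩ : ∃ n : ℕ, 0 < n ∧ a = 1 / n :=
    ((Set.ext_iff.mp hf a).mp hfa).resolve_left ha0
  refine ⟨n, hn, fun ζ hζ ↦ ?_, fun ζ hζ ↦ ⟨?_, ?_⟩⟩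
  · rw [← Real.sqrt_sq (norm_nonneg (z ζ)), hnorm ζ hζ, hna, one_div, Real.sqrt_inv, one_div]
  · rw [hW₁ ζ hζ 1 (hsub h1), hb₁ 1 h1, ← ha, hna]
    simp
  · rw [hW₂ ζ hζ 1 (hsub h1), hb₂ 1 h1, ← ha, hfa, hna]
    simp
end

section
/- Let K = closure(D) × [0,1] ⊆ ℂ × ℝ and let f : K → ℂ be continuous such that for each s ∈ [0,1] the function z ↦ f(z,s) is holomorphic on the open unit disc D. Then f can be uniformly approximated on K by functions of the form P(z,s) where P is a polynomial in the two variables z and s (with complex coefficients). -/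
/-! Dilating `z ↦ ρ z` with `ρ < 1` turns a slice `f(·, s)` into a function holomorphic on a disc
larger than the closed unit disc and, by uniform continuity, uniformly close to the slice; its Taylor
polynomials converge uniformly on the closed disc. In the real variable, Bernstein's theorem for
`s ↦ f(·, s)`, viewed as a continuous path in `C(closedBall 0 1, ℂ)`, gives
`f(z, s) ≈ ∑ₖ bₙₖ(s) f(z, k/n)` uniformly; since the Bernstein basis is a partition of unity,
replacing each slice `f(·, k/n)` by a polynomial in `z` costs at most the largest slice error. -/

open Metric Set Filter Topology Polynomial unitInterval

lemma FormalMultilinearSeries.partialSum_eq_eval {𝕜 : Type*} [NontriviallyNormedField 𝕜]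
    (p : FormalMultilinearSeries 𝕜 𝕜 𝕜) (n : ℕ) (z : 𝕜) :
    p.partialSum n z = (∑ k ∈ Finset.range n, C (p.coeff k) * X ^ k).eval z := by
  simp only [FormalMultilinearSeries.partialSum, eval_finsetSum, eval_mul, eval_C, eval_pow, eval_X,
    p.apply_eq_pow_smul_coeff, smul_eq_mul, mul_comm]

lemma DifferentiableOn.exists_polynomial_near_on_closedBall {g : ℂ → ℂ} {r R : ℝ}
    (hg : DifferentiableOn ℂ g (ball 0 R)) (hr₀ : 0 ≤ r) (hr : r < R) {ε : ℝ} (hε : 0 < ε) :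
    ∃ q : ℂ[X], ∀ z ∈ closedBall (0 : ℂ) r, ‖g z - q.eval z‖ < ε := by
  obtain ⟨R₁, hrR₁, hR₁R⟩ := exists_between hr
  obtain ⟨r₁, hrr₁, hr₁R₁⟩ := exists_between hrR₁
  lift R₁ to NNReal using (hr₀.trans_lt hrR₁).le
  lift r₁ to NNReal using (hr₀.trans_lt hrr₁).le
  have hps := (hg.mono (closedBall_subset_ball hR₁R)).hasFPowerSeriesOnBall
    (by exact_mod_cast hr₀.trans_lt hrR₁)
  have hconv := hps.tendstoUniformlyOn' (by exact_mod_cast hr₁R₁)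
  obtain ⟨N, hN⟩ := (Metric.tendstoUniformlyOn_iff.mp hconv ε hε).exists
  refine ⟨∑ k ∈ Finset.range N, C ((cauchyPowerSeries g 0 R₁).coeff k) * X ^ k, fun z hz => ?_⟩
  rw [← FormalMultilinearSeries.partialSum_eq_eval, ← dist_eq_norm]
  simpa using hN z (closedBall_subset_ball hrr₁ hz)

lemma ContinuousOn.exists_dilation_near {E F : Type*} [NormedAddCommGroup E] [NormedSpace ℝ E]
    [ProperSpace E] [PseudoMetricSpace F] {g : E → F} {R : ℝ}
    (hg : ContinuousOn g (closedBall 0 R)) {ε : ℝ} (hε : 0 < ε) :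
    ∃ ρ ∈ Ioo (0 : ℝ) 1, ∀ z ∈ closedBall (0 : E) R, dist (g (ρ • z)) (g z) < ε := by
  obtain ⟨δ, hδ, hgδ⟩ := Metric.uniformContinuousOn_iff.mp
    ((isCompact_closedBall 0 R).uniformContinuousOn_of_continuous hg) ε hε
  have hclose : ∀ᶠ ρ in 𝓝 (1 : ℝ), |1 - ρ| * R < δ := by
    have : Tendsto (fun ρ : ℝ => |1 - ρ| * R) (𝓝 1) (𝓝 0) := by
      simpa using ((continuous_const.sub continuous_id).abs.mul continuous_const).tendsto
        (f := fun ρ : ℝ => |1 - ρ| * R) 1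
    exact this.eventually (gt_mem_nhds hδ)
  obtain ⟨ρ, hρδ, hρ⟩ := ((eventually_nhdsWithin_of_eventually_nhds hclose).and
    (Ioo_mem_nhdsLT (zero_lt_one' ℝ))).exists
  refine ⟨ρ, hρ, fun z hz => hgδ _ ?_ z hz ?_⟩
  · rw [mem_closedBall_zero_iff] at hz ⊢
    rw [norm_smul, Real.norm_of_nonneg hρ.1.le]
    nlinarith [norm_nonneg z, hρ.2]
  · rw [mem_closedBall_zero_iff] at hz
    calc dist (ρ • z) z = |1 - ρ| * ‖z‖ := by
          rw [dist_eq_norm, norm_sub_rev, ← Real.norm_eq_abs, ← norm_smul, sub_smul, one_smul]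
      _ ≤ |1 - ρ| * R := by gcongr
      _ < δ := hρδ

theorem exists_polynomial_near_of_continuousOn_closedBall {g : ℂ → ℂ} {R : ℝ} (hR : 0 < R)
    (hc : ContinuousOn g (closedBall 0 R)) (hd : DifferentiableOn ℂ g (ball 0 R))
    {ε : ℝ} (hε : 0 < ε) :
    ∃ q : ℂ[X], ∀ z ∈ closedBall (0 : ℂ) R, ‖g z - q.eval z‖ < ε := by
  obtain ⟨ρ, ⟨hρ₀, hρ₁⟩, hρ⟩ := hc.exists_dilation_near (half_pos hε)
  have hdil : DifferentiableOn ℂ (fun z => g (ρ * z)) (ball 0 (R / ρ)) := by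
    refine hd.comp (by fun_prop) fun z hz => ?_
    rw [mem_ball_zero_iff, lt_div_iff₀ hρ₀] at hz
    rw [mem_ball_zero_iff, norm_mul, Complex.norm_real, Real.norm_of_nonneg hρ₀.le]
    linarith
  obtain ⟨q, hq⟩ := hdil.exists_polynomial_near_on_closedBall hR.le
    ((lt_div_iff₀ hρ₀).mpr (mul_lt_of_lt_one_right hR hρ₁)) (half_pos hε)
  refine ⟨q, fun z hz => ?_⟩
  have hdz : ‖g z - g (ρ * z)‖ < ε / 2 := by
    rw [← dist_eq_norm, dist_comm, ← Complex.real_smul]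
    exact hρ z hz
  calc ‖g z - q.eval z‖ ≤ ‖g z - g (ρ * z)‖ + ‖g (ρ * z) - q.eval z‖ :=
        norm_sub_le_norm_sub_add_norm_sub _ _ _
    _ < ε / 2 + ε / 2 := add_lt_add hdz (hq z hz)
    _ = ε := add_halves ε

lemma bernsteinPolynomial_eval_ofReal (n ν : ℕ) (x : I) :
    (bernsteinPolynomial ℂ n ν).eval (x : ℂ) = bernstein n ν x := by
  rw [← bernsteinPolynomial.map (algebraMap ℝ ℂ), eval_map, ← Complex.coe_algebraMap,
    eval₂_at_apply]
  rfl

lemma MvPolynomial.eval_aeval_X {R ι : Type*} [CommSemiring R] (v : ι → R) (i : ι) (q : R[X]) :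
    eval v (Polynomial.aeval (X i) q) = q.eval (v i) := by
  change aeval v _ = _
  rw [← Polynomial.aeval_algHom_apply, aeval_X, Polynomial.coe_aeval_eq_eval]

lemma norm_sum_bernstein_smul_le {E : Type*} [SeminormedAddCommGroup E] [NormedSpace ℝ E]
    {n : ℕ} {v : Fin (n + 1) → E} {η : ℝ} (hv : ∀ k, ‖v k‖ ≤ η) (x : I) :
    ‖∑ k : Fin (n + 1), bernstein n k x • v k‖ ≤ η :=
  calc ‖∑ k : Fin (n + 1), bernstein n k x • v k‖
      ≤ ∑ k : Fin (n + 1), bernstein n k x * η := by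
        refine (norm_sum_le _ _).trans (Finset.sum_le_sum fun k _ => ?_)
        rw [norm_smul, Real.norm_of_nonneg bernstein_nonneg]
        exact mul_le_mul_of_nonneg_left (hv k) bernstein_nonneg
    _ = η := by rw [← Finset.sum_mul, bernstein.probability, one_mul]

lemma eval_sum_aeval_mul_bernsteinPolynomial {n : ℕ} (q : Fin (n + 1) → ℂ[X]) (z : ℂ) (x : I) :
    MvPolynomial.eval ![z, (x : ℂ)] (∑ k : Fin (n + 1),
      aeval (MvPolynomial.X 0) (q k) * aeval (MvPolynomial.X 1) (bernsteinPolynomial ℂ n k)) =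
      ∑ k : Fin (n + 1), bernstein n k x • (q k).eval z := by
  simp only [map_sum, map_mul, MvPolynomial.eval_aeval_X, Matrix.cons_val_zero,
    Matrix.cons_val_one]
  refine Finset.sum_congr rfl fun k _ => ?_
  rw [bernsteinPolynomial_eval_ofReal, Complex.real_smul, mul_comm]

theorem ContinuousOn.exists_bernstein_near {X E : Type*} [TopologicalSpace X]
    [NormedAddCommGroup E] [NormedSpace ℝ E] {f : X × ℝ → E} {K : Set X} (hK : IsCompact K)
    (hf : ContinuousOn f (K ×ˢ Icc 0 1)) {ε : ℝ} (hε : 0 < ε) :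
    ∃ n : ℕ, ∀ y ∈ K, ∀ x : I,
      dist (f (y, x)) (∑ k : Fin (n + 1), bernstein n k x • f (y, bernstein.z k)) < ε := by
  have := isCompact_iff_compactSpace.mp hK
  let F : C(I, C(K, E)) := ContinuousMap.curry
    ⟨fun p => f (p.2, p.1), hf.comp_continuous (by fun_prop) fun p => ⟨p.2.2, p.1.2⟩⟩
  obtain ⟨n, hn⟩ :=
    ((bernsteinApproximation_uniform F).eventually (ball_mem_nhds F hε)).exists
  refine ⟨n, fun y hy x => ?_⟩
  have := (ContinuousMap.dist_apply_le_dist (⟨y, hy⟩ : K)).trans_lt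
    ((ContinuousMap.dist_apply_le_dist x).trans_lt hn)
  rw [dist_comm]
  simpa [F, bernsteinApproximation.apply] using this

theorem approximation_on_disc_times_interval
    (f : ℂ × ℝ → ℂ)
    (hc : ContinuousOn f (closedBall (0 : ℂ) 1 ×ˢ Icc (0 : ℝ) 1))
    (hd : ∀ s ∈ Icc (0 : ℝ) 1,
      DifferentiableOn ℂ (fun z => f (z, s)) (ball (0 : ℂ) 1)) :
    ∀ ε > (0 : ℝ), ∃ P : MvPolynomial (Fin 2) ℂ,
      ∀ p ∈ closedBall (0 : ℂ) 1 ×ˢ Icc (0 : ℝ) 1,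
        ‖f p - MvPolynomial.eval ![p.1, (p.2 : ℂ)] P‖ < ε := by
  intro ε hε
  obtain ⟨n, hn⟩ := hc.exists_bernstein_near (isCompact_closedBall 0 1) (half_pos hε)
  choose q hq using fun k : Fin (n + 1) =>
    exists_polynomial_near_of_continuousOn_closedBall one_pos
      (hc.comp (by fun_prop) fun z hz => mk_mem_prod hz (bernstein.z k).2)
      (hd _ (bernstein.z k).2) (half_pos hε)
  refine ⟨∑ k : Fin (n + 1), aeval (MvPolynomial.X 0) (q k) *
    aeval (MvPolynomial.X 1) (bernsteinPolynomial ℂ n k), ?_⟩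
  rintro ⟨z, s⟩ ⟨hz, hs⟩
  set x : I := ⟨s, hs⟩
  have hslices : ‖∑ k : Fin (n + 1), bernstein n k x • (f (z, bernstein.z k) - (q k).eval z)‖ ≤
      ε / 2 :=
    norm_sum_bernstein_smul_le (fun k => (hq k z hz).le) x
  calc ‖f (z, x) - MvPolynomial.eval ![z, (x : ℂ)] _‖
      ≤ dist (f (z, x)) (∑ k : Fin (n + 1), bernstein n k x • f (z, bernstein.z k)) +
        ‖∑ k : Fin (n + 1), bernstein n k x • (f (z, bernstein.z k) - (q k).eval z)‖ := by
        rw [eval_sum_aeval_mul_bernsteinPolynomial, dist_eq_norm]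
        simp only [smul_sub, Finset.sum_sub_distrib]
        exact norm_sub_le_norm_sub_add_norm_sub _ _ _
    _ < ε / 2 + ε / 2 := add_lt_add_of_lt_of_le (hn z hz x) hslices
    _ = ε := add_halves ε
end
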